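/- arXiv:1301.2192 — 4 statements merged into one kernel-verified Lean document; each statement's English description precedes it below -/
import Mathlib

section
/- Let κ = {B ∈ h : B(E^⊥) ⊆ E}, where h is the Lie algebra of H = Isom(X, Φ|_X) (i.e., B* = −B with respect to Φ|_X). Define Γ₁ : κ → Hom(W', E) by Γ₁(B) = B ξ*, and Γ₂ : Hom(W', E) → h by Γ₂(A) = A(ξξ*)^{-1}ξ − ξ*(ξξ*)^{-1}A*. Then Γ₂ takes values in κ, Γ₁ ∘ Γ₂ = id on Hom(W', E), and the sequence 0 → h^{E^⊥} → κ → Hom(W', E) → 0 (with the inclusion and Γ₁) is exact. In particular dim κ = dim h^{E^⊥} + (dim E)(dim W). -/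
section

variable (F : Type*) [Field F]
variable (W W' X : Type*)
variable [AddCommGroup W] [Module F W] [AddCommGroup W'] [Module F W']
variable [AddCommGroup X] [Module F X]

/-- The Lie algebra `𝔥` of `H = Isom(X, Φ)`: skew operators `B` (`B* = −B`). -/
def skewSet (Φ : X →ₗ[F] X →ₗ[F] F) : Submodule F (X →ₗ[F] X) where
  carrier := {B | ∀ x y : X, Φ (B x) y + Φ x (B y) = 0}
  zero_mem' := by intro x y; simp
  add_mem' := by
    intro B C hB hC x y
    simp only [LinearMap.add_apply, map_add, LinearMap.add_apply]
    linear_combination hB x y + hC x y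
  smul_mem' := by
    intro c B hB x y
    simp only [LinearMap.smul_apply, map_smul, LinearMap.smul_apply, smul_eq_mul]
    linear_combination c * hB x y

/-- `κ = {B ∈ 𝔥 : B(E^⊥) ⊆ E}` where `E = ker ξ`. -/
def kappaSet (Φ : X →ₗ[F] X →ₗ[F] F) (ξ : X →ₗ[F] W) : Submodule F (X →ₗ[F] X) where
  carrier := {B | (∀ x y : X, Φ (B x) y + Φ x (B y) = 0) ∧
      ∀ x : X, (∀ y ∈ LinearMap.ker ξ, Φ x y = 0) → B x ∈ LinearMap.ker ξ}
  zero_mem' := by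
    refine ⟨by intro x y; simp, by intro x _; simp⟩
  add_mem' := by
    intro B C hB hC
    refine ⟨?_, ?_⟩
    · intro x y
      simp only [LinearMap.add_apply, map_add, LinearMap.add_apply]
      linear_combination hB.1 x y + hC.1 x y
    · intro x hx
      exact Submodule.add_mem _ (hB.2 x hx) (hC.2 x hx)
  smul_mem' := by
    intro c B hB
    refine ⟨?_, ?_⟩
    · intro x y
      simp only [LinearMap.smul_apply, map_smul, LinearMap.smul_apply, smul_eq_mul]
      linear_combination c * hB.1 x y
    · intro x hx
      exact Submodule.smul_mem _ c (hB.2 x hx)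

/-- `𝔥^{E^⊥} = {B ∈ 𝔥 : B|_{E^⊥} = 0}` where `E = ker ξ`. -/
def hEperpSet (Φ : X →ₗ[F] X →ₗ[F] F) (ξ : X →ₗ[F] W) : Submodule F (X →ₗ[F] X) where
  carrier := {B | (∀ x y : X, Φ (B x) y + Φ x (B y) = 0) ∧
      ∀ x : X, (∀ y ∈ LinearMap.ker ξ, Φ x y = 0) → B x = 0}
  zero_mem' := by
    refine ⟨by intro x y; simp, by intro x _; simp⟩
  add_mem' := by
    intro B C hB hC
    refine ⟨?_, ?_⟩
    · intro x y
      simp only [LinearMap.add_apply, map_add, LinearMap.add_apply]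
      linear_combination hB.1 x y + hC.1 x y
    · intro x hx
      simp [LinearMap.add_apply, hB.2 x hx, hC.2 x hx]
  smul_mem' := by
    intro c B hB
    refine ⟨?_, ?_⟩
    · intro x y
      simp only [LinearMap.smul_apply, map_smul, LinearMap.smul_apply, smul_eq_mul]
      linear_combination c * hB.1 x y
    · intro x hx
      simp [LinearMap.smul_apply, hB.2 x hx]

end

/-!
Put `υ = (ξξ*)⁻¹`. Since `E` is nondegenerate, `ξ* υ ξ` is the projection onto `E^⊥` along `E`,
so an element of `κ` vanishing on the image of `ξ*` vanishes on `E^⊥`: this identifies the kernel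
of `Γ₁` with `𝔥^{E^⊥}`. The pairing `(u, v) ↦ ⟨υ u, v⟩` on `W` inherits the `ε`-symmetry of `Φ`,
which makes `Γ₂(A)` skew; since `A*` kills `E^⊥ ⊇ im ξ*`, `Γ₁ Γ₂ = id`. Rank–nullity for
`Γ₁ : κ ↠ Hom(W', E)` then gives the dimension count, as `W' ≅ W`.
-/

theorem LinearMap.exists_flip_comp_eq {F V V' X : Type*} [Field F]
    [AddCommGroup V] [Module F V] [FiniteDimensional F V]
    [AddCommGroup V'] [Module F V'] [FiniteDimensional F V']
    [AddCommGroup X] [Module F X]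
    (P : V' →ₗ[F] V →ₗ[F] F) (hP : ∀ v : V, (∀ v' : V', P v' v = 0) → v = 0)
    (hdim : Module.finrank F V = Module.finrank F V') (g : X →ₗ[F] Module.Dual F V') :
    ∃ f : X →ₗ[F] V, ∀ (v' : V') (x : X), P v' (f x) = g x v' := by
  have hinj : Function.Injective P.flip := by
    rw [← LinearMap.ker_eq_bot, LinearMap.ker_eq_bot']
    exact fun v hv => hP v fun v' => LinearMap.congr_fun hv v'
  have hsurj : Function.Surjective P.flip :=
    (LinearMap.injective_iff_surjective_of_finrank_eq_finrank
      (by rw [Subspace.dual_finrank_eq, hdim])).mp hinj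
  let e := LinearEquiv.ofBijective P.flip ⟨hinj, hsurj⟩
  exact ⟨e.symm.toLinearMap ∘ₗ g, fun v' x =>
    LinearMap.congr_fun (e.apply_symm_apply (g x)) v'⟩

section KappaSequence

variable {F W W' X : Type*} [Field F] [AddCommGroup W] [Module F W]
  [AddCommGroup W'] [Module F W'] [AddCommGroup X] [Module F X]
  {Bp : W' →ₗ[F] W →ₗ[F] F} {Φ : X →ₗ[F] X →ₗ[F] F} {ε : F}
  {ξ : X →ₗ[F] W} {ξs : W' →ₗ[F] X} {υ : W →ₗ[F] W'}

theorem ξs_orthogonal_ker (hξs : ∀ (w' : W') (x : X), Φ (ξs w') x = Bp w' (ξ x)) (w' : W') :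
    ∀ y ∈ LinearMap.ker ξ, Φ (ξs w') y = 0 := by
  intro y hy
  rw [hξs, LinearMap.mem_ker.mp hy, map_zero]

theorem ξs_υ_ξ_eq_of_orthogonal_ker
    (hEnd : ∀ x ∈ LinearMap.ker ξ, (∀ y ∈ LinearMap.ker ξ, Φ x y = 0) → x = 0)
    (hξs : ∀ (w' : W') (x : X), Φ (ξs w') x = Bp w' (ξ x))
    (hυ1 : ∀ w : W, ξ (ξs (υ w)) = w) {x : X} (hx : ∀ y ∈ LinearMap.ker ξ, Φ x y = 0) :
    ξs (υ (ξ x)) = x := by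
  have hmem : ξs (υ (ξ x)) - x ∈ LinearMap.ker ξ := by
    simp [LinearMap.mem_ker, hυ1]
  refine (sub_eq_zero.mp (hEnd _ hmem fun y hy => ?_))
  rw [map_sub, LinearMap.sub_apply, ξs_orthogonal_ker hξs _ y hy, hx y hy, sub_zero]

theorem Bp_υ_symm (hΦε : ∀ x y : X, Φ x y = ε * Φ y x)
    (hξs : ∀ (w' : W') (x : X), Φ (ξs w') x = Bp w' (ξ x))
    (hυ1 : ∀ w : W, ξ (ξs (υ w)) = w) (u v : W) :
    Bp (υ u) v = ε * Bp (υ v) u :=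
  calc Bp (υ u) v = Bp (υ u) (ξ (ξs (υ v))) := by rw [hυ1]
    _ = ε * Φ (ξs (υ v)) (ξs (υ u)) := by rw [← hξs, hΦε]
    _ = ε * Bp (υ v) u := by rw [hξs, hυ1]

section Adjoint

variable {A : W' →ₗ[F] X} {As : X →ₗ[F] W}

theorem adjoint_eq_zero_of_orthogonal_ker (hΦε : ∀ x y : X, Φ x y = ε * Φ y x)
    (hBp2 : ∀ w : W, (∀ w' : W', Bp w' w = 0) → w = 0)
    (hA : ∀ w' : W', A w' ∈ LinearMap.ker ξ)
    (hAs : ∀ (w' : W') (x : X), Φ (A w') x = Bp w' (As x))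
    {x : X} (hx : ∀ y ∈ LinearMap.ker ξ, Φ x y = 0) :
    As x = 0 :=
  hBp2 _ fun w' => by rw [← hAs, hΦε, hx _ (hA w'), mul_zero]

theorem sub_mem_kappaSet (hΦε : ∀ x y : X, Φ x y = ε * Φ y x)
    (hBp2 : ∀ w : W, (∀ w' : W', Bp w' w = 0) → w = 0)
    (hξs : ∀ (w' : W') (x : X), Φ (ξs w') x = Bp w' (ξ x))
    (hυ1 : ∀ w : W, ξ (ξs (υ w)) = w)
    (hA : ∀ w' : W', A w' ∈ LinearMap.ker ξ)
    (hAs : ∀ (w' : W') (x : X), Φ (A w') x = Bp w' (As x)) :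
    A ∘ₗ υ ∘ₗ ξ - ξs ∘ₗ υ ∘ₗ As ∈ kappaSet F W X Φ ξ := by
  refine ⟨fun x y => ?_, fun x hx => ?_⟩
  · have hsymm := Bp_υ_symm hΦε hξs hυ1
    simp only [LinearMap.sub_apply, LinearMap.comp_apply, map_sub, LinearMap.sub_apply]
    rw [hAs, hξs, hΦε x, hΦε x, hAs, hξs, hsymm (ξ x), hsymm (As x)]
    ring
  · simp [LinearMap.mem_ker.mp (hA _), adjoint_eq_zero_of_orthogonal_ker hΦε hBp2 hA hAs hx]

theorem sub_apply_ξs (hΦε : ∀ x y : X, Φ x y = ε * Φ y x)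
    (hBp2 : ∀ w : W, (∀ w' : W', Bp w' w = 0) → w = 0)
    (hξs : ∀ (w' : W') (x : X), Φ (ξs w') x = Bp w' (ξ x))
    (hυ2 : ∀ w' : W', υ (ξ (ξs w')) = w')
    (hA : ∀ w' : W', A w' ∈ LinearMap.ker ξ)
    (hAs : ∀ (w' : W') (x : X), Φ (A w') x = Bp w' (As x))
    (w' : W') :
    (A ∘ₗ υ ∘ₗ ξ - ξs ∘ₗ υ ∘ₗ As) (ξs w') = A w' := by
  simp [hυ2, adjoint_eq_zero_of_orthogonal_ker hΦε hBp2 hA hAs (ξs_orthogonal_ker hξs w')]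

end Adjoint

theorem apply_ξs_eq_zero_iff_mem_hEperpSet
    (hEnd : ∀ x ∈ LinearMap.ker ξ, (∀ y ∈ LinearMap.ker ξ, Φ x y = 0) → x = 0)
    (hξs : ∀ (w' : W') (x : X), Φ (ξs w') x = Bp w' (ξ x))
    (hυ1 : ∀ w : W, ξ (ξs (υ w)) = w) {B : X →ₗ[F] X} (hB : B ∈ kappaSet F W X Φ ξ) :
    (∀ w' : W', B (ξs w') = 0) ↔ B ∈ hEperpSet F W X Φ ξ := by
  refine ⟨fun h => ⟨hB.1, fun x hx => ?_⟩, fun h w' => h.2 _ (ξs_orthogonal_ker hξs w')⟩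
  rw [← ξs_υ_ξ_eq_of_orthogonal_ker hEnd hξs hυ1 hx]
  exact h _

theorem hEperpSet_le_kappaSet (Φ : X →ₗ[F] X →ₗ[F] F) (ξ : X →ₗ[F] W) :
    hEperpSet F W X Φ ξ ≤ kappaSet F W X Φ ξ :=
  fun B hB => ⟨hB.1, fun x hx => by rw [hB.2 x hx]; exact Submodule.zero_mem _⟩

def gammaOne (hξs : ∀ (w' : W') (x : X), Φ (ξs w') x = Bp w' (ξ x)) :
    kappaSet F W X Φ ξ →ₗ[F] (W' →ₗ[F] LinearMap.ker ξ) where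
  toFun B := LinearMap.codRestrict _ ((B : X →ₗ[F] X) ∘ₗ ξs)
    fun w' => B.2.2 _ (ξs_orthogonal_ker hξs w')
  map_add' _ _ := rfl
  map_smul' _ _ := rfl

theorem finrank_eq_finrank_of_υ_inverse (hυ1 : ∀ w : W, ξ (ξs (υ w)) = w)
    (hυ2 : ∀ w' : W', υ (ξ (ξs w')) = w') :
    Module.finrank F W = Module.finrank F W' :=
  (LinearEquiv.ofLinearMap υ (ξ ∘ₗ ξs) (LinearMap.ext hυ2) (LinearMap.ext hυ1)).finrank_eq

variable [FiniteDimensional F W] [FiniteDimensional F W']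

theorem exists_mem_kappaSet_apply_ξs_eq (hΦε : ∀ x y : X, Φ x y = ε * Φ y x)
    (hBp2 : ∀ w : W, (∀ w' : W', Bp w' w = 0) → w = 0)
    (hξs : ∀ (w' : W') (x : X), Φ (ξs w') x = Bp w' (ξ x))
    (hυ1 : ∀ w : W, ξ (ξs (υ w)) = w) (hυ2 : ∀ w' : W', υ (ξ (ξs w')) = w')
    {A : W' →ₗ[F] X} (hA : ∀ w' : W', A w' ∈ LinearMap.ker ξ) :
    ∃ B ∈ kappaSet F W X Φ ξ, ∀ w' : W', B (ξs w') = A w' := by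
  obtain ⟨As, hAs⟩ := LinearMap.exists_flip_comp_eq Bp hBp2
    (finrank_eq_finrank_of_υ_inverse hυ1 hυ2) (Φ.flip.compl₂ A)
  have hAs' : ∀ (w' : W') (x : X), Φ (A w') x = Bp w' (As x) := fun w' x => (hAs w' x).symm
  exact ⟨_, sub_mem_kappaSet hΦε hBp2 hξs hυ1 hA hAs', sub_apply_ξs hΦε hBp2 hξs hυ2 hA hAs'⟩

theorem finrank_kappaSet [FiniteDimensional F X] (hΦε : ∀ x y : X, Φ x y = ε * Φ y x)
    (hBp2 : ∀ w : W, (∀ w' : W', Bp w' w = 0) → w = 0)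
    (hEnd : ∀ x ∈ LinearMap.ker ξ, (∀ y ∈ LinearMap.ker ξ, Φ x y = 0) → x = 0)
    (hξs : ∀ (w' : W') (x : X), Φ (ξs w') x = Bp w' (ξ x))
    (hυ1 : ∀ w : W, ξ (ξs (υ w)) = w) (hυ2 : ∀ w' : W', υ (ξ (ξs w')) = w') :
    Module.finrank F (kappaSet F W X Φ ξ) =
      Module.finrank F (hEperpSet F W X Φ ξ) +
        Module.finrank F (LinearMap.ker ξ) * Module.finrank F W := by
  have hsurj : Function.Surjective (gammaOne hξs) := fun A => by
    obtain ⟨B, hB, hBA⟩ := exists_mem_kappaSet_apply_ξs_eq hΦε hBp2 hξs hυ1 hυ2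
      (A := (LinearMap.ker ξ).subtype ∘ₗ A) fun w' => (A w').2
    exact ⟨⟨B, hB⟩, LinearMap.ext fun w' => Subtype.ext (hBA w')⟩
  have hker : LinearMap.ker (gammaOne hξs) =
      (hEperpSet F W X Φ ξ).comap (kappaSet F W X Φ ξ).subtype := by
    ext ⟨B, hB⟩
    rw [Submodule.mem_comap, Submodule.subtype_apply,
      ← apply_ξs_eq_zero_iff_mem_hEperpSet hEnd hξs hυ1 hB, LinearMap.mem_ker, LinearMap.ext_iff]
    exact forall_congr' fun _ => Submodule.coe_eq_zero.symm
  rw [← (gammaOne hξs).finrank_range_add_finrank_ker,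
    LinearMap.range_eq_top_of_surjective _ hsurj, finrank_top, Module.finrank_linearMap, hker,
    (Submodule.comapSubtypeEquivOfLe (hEperpSet_le_kappaSet Φ ξ)).finrank_eq,
    finrank_eq_finrank_of_υ_inverse hυ1 hυ2]
  ring

end KappaSequence

theorem kappa_exact_sequence_general
    (F : Type*) [Field F]
    (W W' X : Type*)
    [AddCommGroup W] [Module F W] [FiniteDimensional F W]
    [AddCommGroup W'] [Module F W'] [FiniteDimensional F W']
    [AddCommGroup X] [Module F X] [FiniteDimensional F X]
    (ε : F)
    (Bp : W' →ₗ[F] W →ₗ[F] F)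
    (hBp2 : ∀ w : W, (∀ w' : W', Bp w' w = 0) → w = 0)
    (Φ : X →ₗ[F] X →ₗ[F] F)
    (hΦε : ∀ x y : X, Φ x y = ε * Φ y x)
    (ξ : X →ₗ[F] W)
    (hEnd : ∀ x ∈ LinearMap.ker ξ, (∀ y ∈ LinearMap.ker ξ, Φ x y = 0) → x = 0)
    (ξs : W' →ₗ[F] X)
    (hξs : ∀ (w' : W') (x : X), Φ (ξs w') x = Bp w' (ξ x))
    (υ : W →ₗ[F] W')
    (hυ1 : ∀ w : W, ξ (ξs (υ w)) = w) (hυ2 : ∀ w' : W', υ (ξ (ξs w')) = w') :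
    -- Γ₁ maps κ into Hom(W', E) :
    (∀ B ∈ kappaSet F W X Φ ξ, ∀ w' : W', B (ξs w') ∈ LinearMap.ker ξ) ∧
    -- Γ₂ takes values in κ and Γ₁ ∘ Γ₂ = id :
    (∀ (A : W' →ₗ[F] X), (∀ w' : W', A w' ∈ LinearMap.ker ξ) →
      ∀ As : X →ₗ[F] W, (∀ (w' : W') (x : X), Φ (A w') x = Bp w' (As x)) →
        (A ∘ₗ υ ∘ₗ ξ - ξs ∘ₗ υ ∘ₗ As) ∈ kappaSet F W X Φ ξ ∧
          ∀ w' : W', (A ∘ₗ υ ∘ₗ ξ - ξs ∘ₗ υ ∘ₗ As) (ξs w') = A w') ∧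
    -- the kernel of Γ₁ on κ is 𝔥^{E^⊥} :
    (∀ B ∈ kappaSet F W X Φ ξ,
      ((∀ w' : W', B (ξs w') = 0) ↔ B ∈ hEperpSet F W X Φ ξ)) ∧
    -- Γ₁ is surjective onto Hom(W', E) :
    (∀ (A : W' →ₗ[F] X), (∀ w' : W', A w' ∈ LinearMap.ker ξ) →
      ∃ B ∈ kappaSet F W X Φ ξ, ∀ w' : W', B (ξs w') = A w') ∧
    -- the dimension count :
    Module.finrank F ↥(kappaSet F W X Φ ξ) =
      Module.finrank F ↥(hEperpSet F W X Φ ξ) +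
        Module.finrank F ↥(LinearMap.ker ξ) * Module.finrank F W :=
  ⟨fun _ hB w' => hB.2 _ (ξs_orthogonal_ker hξs w'),
    fun _ hA _ hAs =>
      ⟨sub_mem_kappaSet hΦε hBp2 hξs hυ1 hA hAs, sub_apply_ξs hΦε hBp2 hξs hυ2 hA hAs⟩,
    fun _ hB => apply_ξs_eq_zero_iff_mem_hEperpSet hEnd hξs hυ1 hB,
    fun _ hA => exists_mem_kappaSet_apply_ξs_eq hΦε hBp2 hξs hυ1 hυ2 hA,
    finrank_kappaSet hΦε hBp2 hEnd hξs hυ1 hυ2⟩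

/-- The exact sequence for `κ`: with `Γ₁(B) = B ξ*` and
`Γ₂(A) = A (ξξ*)⁻¹ ξ − ξ* (ξξ*)⁻¹ A*`, the map `Γ₂` takes values in `κ`, `Γ₁ ∘ Γ₂ = id`
on `Hom(W', E)`, and `0 → 𝔥^{E^⊥} → κ → Hom(W', E) → 0` is exact; in particular
`dim κ = dim 𝔥^{E^⊥} + (dim E)(dim W)`. -/
theorem kappa_exact_sequence
    (F : Type*) [Field F] (hchar : (2 : F) ≠ 0)
    (W W' X : Type*)
    [AddCommGroup W] [Module F W] [FiniteDimensional F W]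
    [AddCommGroup W'] [Module F W'] [FiniteDimensional F W']
    [AddCommGroup X] [Module F X] [FiniteDimensional F X]
    (ε : F) (hε : ε = 1 ∨ ε = -1)
    (Bp : W' →ₗ[F] W →ₗ[F] F)
    (hBp1 : ∀ w' : W', (∀ w : W, Bp w' w = 0) → w' = 0)
    (hBp2 : ∀ w : W, (∀ w' : W', Bp w' w = 0) → w = 0)
    (Φ : X →ₗ[F] X →ₗ[F] F)
    (hΦnd : ∀ x : X, (∀ y : X, Φ x y = 0) → x = 0)
    (hΦε : ∀ x y : X, Φ x y = ε * Φ y x)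
    (ξ : X →ₗ[F] W) (hξsurj : Function.Surjective ξ)
    (hEnd : ∀ x ∈ LinearMap.ker ξ, (∀ y ∈ LinearMap.ker ξ, Φ x y = 0) → x = 0)
    (ξs : W' →ₗ[F] X)
    (hξs : ∀ (w' : W') (x : X), Φ (ξs w') x = Bp w' (ξ x))
    (υ : W →ₗ[F] W')
    (hυ1 : ∀ w : W, ξ (ξs (υ w)) = w) (hυ2 : ∀ w' : W', υ (ξ (ξs w')) = w') :
    -- Γ₁ maps κ into Hom(W', E) :
    (∀ B ∈ kappaSet F W X Φ ξ, ∀ w' : W', B (ξs w') ∈ LinearMap.ker ξ) ∧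
    -- Γ₂ takes values in κ and Γ₁ ∘ Γ₂ = id :
    (∀ (A : W' →ₗ[F] X), (∀ w' : W', A w' ∈ LinearMap.ker ξ) →
      ∀ As : X →ₗ[F] W, (∀ (w' : W') (x : X), Φ (A w') x = Bp w' (As x)) →
        (A ∘ₗ υ ∘ₗ ξ - ξs ∘ₗ υ ∘ₗ As) ∈ kappaSet F W X Φ ξ ∧
          ∀ w' : W', (A ∘ₗ υ ∘ₗ ξ - ξs ∘ₗ υ ∘ₗ As) (ξs w') = A w') ∧
    -- the kernel of Γ₁ on κ is 𝔥^{E^⊥} :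
    (∀ B ∈ kappaSet F W X Φ ξ,
      ((∀ w' : W', B (ξs w') = 0) ↔ B ∈ hEperpSet F W X Φ ξ)) ∧
    -- Γ₁ is surjective onto Hom(W', E) :
    (∀ (A : W' →ₗ[F] X), (∀ w' : W', A w' ∈ LinearMap.ker ξ) →
      ∃ B ∈ kappaSet F W X Φ ξ, ∀ w' : W', B (ξs w') = A w') ∧
    -- the dimension count :
    Module.finrank F ↥(kappaSet F W X Φ ξ) =
      Module.finrank F ↥(hEperpSet F W X Φ ξ) +
        Module.finrank F ↥(LinearMap.ker ξ) * Module.finrank F W :=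
  kappa_exact_sequence_general F W W' X ε Bp hBp2 Φ hΦε ξ hEnd ξs hξs υ hυ1 hυ2
end

section
/- The Lie algebra h of H = Isom(X, Φ|_X) decomposes as a direct sum h = h^E ⊕ h^{E^⊥} ⊕ im Γ₂, where h^E = {B ∈ h : B(E) = 0 and B(E^⊥) ⊆ E^⊥}, h^{E^⊥} is defined analogously, and Γ₂ : Hom(W', E) → κ ⊆ h is the section Γ₂(A) = A(ξξ*)^{-1}ξ − ξ*(ξξ*)^{-1}A*. -/
/-!
With `E = ker ξ`, the map `P = ξ* υ ξ` (where `υ = (ξξ*)⁻¹`) is the projection onto `E^⊥`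
along `E`, and the `ε`-symmetry of `Φ` makes it self-adjoint; put `Q = 1 - P`. A skew `C`
splits as `PCP + QCQ + (QCP + PCQ)`, where `PCP ∈ 𝔥^E`, `QCQ ∈ 𝔥^{E^⊥}` and
`QCP + PCQ = Γ₂(QCξ*)`. Conversely the compressions `B ↦ PBP` and `B ↦ QBQ` are the identity on
`𝔥^E`, resp. `𝔥^{E^⊥}`, and kill the other two summands, which gives uniqueness.
-/

open LinearMap (ker)

section

variable {R W W' X : Type*} [CommRing R] [AddCommGroup W] [Module R W]
  [AddCommGroup W'] [Module R W'] [AddCommGroup X] [Module R X]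

theorem LinearMap.isSkewAdjoint_iff {Φ : X →ₗ[R] X →ₗ[R] R} {B : Module.End R X} :
    Φ.IsSkewAdjoint B ↔ ∀ x y, Φ (B x) y + Φ x (B y) = 0 := by
  simp only [LinearMap.IsSkewAdjoint, LinearMap.IsAdjointPair, Pi.neg_apply, map_neg,
    eq_neg_iff_add_eq_zero]

theorem LinearMap.IsSkewAdjoint.conj {Φ : X →ₗ[R] X →ₗ[R] R} {P C : Module.End R X}
    (hP : Φ.IsSelfAdjoint P) (hC : Φ.IsSkewAdjoint C) : Φ.IsSkewAdjoint (P * C * P) := by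
  intro x y
  simp only [Module.End.mul_apply, Pi.neg_apply, map_neg]
  rw [hP, hC, hP, Pi.neg_apply, map_neg, map_neg]

def leftOrthogonal (Φ : X →ₗ[R] X →ₗ[R] R) (N : Submodule R X) : Submodule R X where
  carrier := {x | ∀ y ∈ N, Φ x y = 0}
  add_mem' hx hx' y hy := by simp [hx y hy, hx' y hy]
  zero_mem' _ _ := by simp
  smul_mem' _ _ hx y hy := by simp [hx y hy]

def 𝔥E (Φ : X →ₗ[R] X →ₗ[R] R) (E : Submodule R X) : Set (Module.End R X) :=
  {B | Φ.IsSkewAdjoint B ∧ (∀ e ∈ E, B e = 0) ∧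
    ∀ x ∈ leftOrthogonal Φ E, B x ∈ leftOrthogonal Φ E}

def 𝔥EPerp (Φ : X →ₗ[R] X →ₗ[R] R) (E : Submodule R X) : Set (Module.End R X) :=
  {B | Φ.IsSkewAdjoint B ∧ (∀ x ∈ leftOrthogonal Φ E, B x = 0) ∧ ∀ e ∈ E, B e ∈ E}

-- `υ` stands for `(ξξ*)⁻¹` and `As` for the adjoint `A*` of `A`.
def imΓ₂ (Bp : W' →ₗ[R] W →ₗ[R] R) (Φ : X →ₗ[R] X →ₗ[R] R) (ξ : X →ₗ[R] W)
    (ξs : W' →ₗ[R] X) (υ : W →ₗ[R] W') : Set (Module.End R X) :=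
  {B | ∃ (A : W' →ₗ[R] X) (As : X →ₗ[R] W), (∀ w', A w' ∈ ker ξ) ∧
    (∀ w' x, Φ (A w') x = Bp w' (As x)) ∧ B = A ∘ₗ υ ∘ₗ ξ - ξs ∘ₗ υ ∘ₗ As}

variable {Bp : W' →ₗ[R] W →ₗ[R] R} {Φ : X →ₗ[R] X →ₗ[R] R} {ξ : X →ₗ[R] W}
  {ξs : W' →ₗ[R] X} {υ : W →ₗ[R] W'}

def perpProj (ξ : X →ₗ[R] W) (ξs : W' →ₗ[R] X) (υ : W →ₗ[R] W') : Module.End R X :=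
  ξs ∘ₗ υ ∘ₗ ξ

theorem perpProj_apply (x : X) : perpProj ξ ξs υ x = ξs (υ (ξ x)) := rfl

theorem perpProj_apply_of_mem_ker {e : X} (he : e ∈ ker ξ) : perpProj ξ ξs υ e = 0 := by
  rw [perpProj_apply, LinearMap.mem_ker.1 he, map_zero, map_zero]

theorem perpProj_apply_ξs (hυ2 : ∀ w', υ (ξ (ξs w')) = w') (w' : W') :
    perpProj ξ ξs υ (ξs w') = ξs w' := by
  rw [perpProj_apply, hυ2]

theorem one_sub_perpProj_apply_mem_ker (hυ1 : ∀ w, ξ (ξs (υ w)) = w) (x : X) :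
    (1 - perpProj ξ ξs υ) x ∈ ker ξ := by
  rw [LinearMap.mem_ker, LinearMap.sub_apply, Module.End.one_apply, map_sub, perpProj_apply, hυ1,
    sub_self]

theorem perpProj_apply_mem_leftOrthogonal (hξs : ∀ w' x, Φ (ξs w') x = Bp w' (ξ x)) (x : X) :
    perpProj ξ ξs υ x ∈ leftOrthogonal Φ (ker ξ) := fun y hy => by
  rw [perpProj_apply, hξs, LinearMap.mem_ker.1 hy, map_zero]

theorem perpProj_apply_of_mem_leftOrthogonal
    (hEnd : ∀ x ∈ ker ξ, x ∈ leftOrthogonal Φ (ker ξ) → x = 0)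
    (hξs : ∀ w' x, Φ (ξs w') x = Bp w' (ξ x)) (hυ1 : ∀ w, ξ (ξs (υ w)) = w) {z : X}
    (hz : z ∈ leftOrthogonal Φ (ker ξ)) : perpProj ξ ξs υ z = z :=
  (sub_eq_zero.1 <| hEnd _ (one_sub_perpProj_apply_mem_ker hυ1 z)
    (sub_mem hz (perpProj_apply_mem_leftOrthogonal hξs z))).symm

theorem perpProj_isSelfAdjoint {ε : R} (hΦε : ∀ x y, Φ x y = ε * Φ y x)
    (hξs : ∀ w' x, Φ (ξs w') x = Bp w' (ξ x)) (hυ1 : ∀ w, ξ (ξs (υ w)) = w) :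
    Φ.IsSelfAdjoint (perpProj ξ ξs υ) := by
  have hP : ∀ x y, Φ (perpProj ξ ξs υ x) y = Φ (perpProj ξ ξs υ x) (perpProj ξ ξs υ y) :=
    fun x y => by rw [perpProj_apply x, hξs, hξs, perpProj_apply y, hυ1]
  intro x y
  rw [hP, hΦε x, hP y x, ← hΦε]

theorem one_sub_perpProj_isSelfAdjoint {ε : R} (hΦε : ∀ x y, Φ x y = ε * Φ y x)
    (hξs : ∀ w' x, Φ (ξs w') x = Bp w' (ξ x)) (hυ1 : ∀ w, ξ (ξs (υ w)) = w) :
    Φ.IsSelfAdjoint ⇑(1 - perpProj ξ ξs υ) :=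
  LinearMap.isAdjointPair_one.sub (perpProj_isSelfAdjoint hΦε hξs hυ1)

theorem perpProj_mul_mul_perpProj_mem_𝔥E {ε : R} (hΦε : ∀ x y, Φ x y = ε * Φ y x)
    (hξs : ∀ w' x, Φ (ξs w') x = Bp w' (ξ x)) (hυ1 : ∀ w, ξ (ξs (υ w)) = w)
    {C : Module.End R X} (hC : Φ.IsSkewAdjoint C) :
    perpProj ξ ξs υ * C * perpProj ξ ξs υ ∈ 𝔥E Φ (ker ξ) :=
  ⟨hC.conj (perpProj_isSelfAdjoint hΦε hξs hυ1),
    fun e he => by simp only [Module.End.mul_apply, perpProj_apply_of_mem_ker he, map_zero],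
    fun _ _ => perpProj_apply_mem_leftOrthogonal hξs _⟩

theorem one_sub_perpProj_mul_mul_one_sub_perpProj_mem_𝔥EPerp {ε : R}
    (hΦε : ∀ x y, Φ x y = ε * Φ y x) (hEnd : ∀ x ∈ ker ξ, x ∈ leftOrthogonal Φ (ker ξ) → x = 0)
    (hξs : ∀ w' x, Φ (ξs w') x = Bp w' (ξ x)) (hυ1 : ∀ w, ξ (ξs (υ w)) = w)
    {C : Module.End R X} (hC : Φ.IsSkewAdjoint C) :
    (1 - perpProj ξ ξs υ) * C * (1 - perpProj ξ ξs υ) ∈ 𝔥EPerp Φ (ker ξ) :=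
  ⟨hC.conj (one_sub_perpProj_isSelfAdjoint hΦε hξs hυ1),
    fun z hz => by
      simp only [Module.End.mul_apply, LinearMap.sub_apply, Module.End.one_apply,
        perpProj_apply_of_mem_leftOrthogonal hEnd hξs hυ1 hz, sub_self, map_zero],
    fun _ _ => one_sub_perpProj_apply_mem_ker hυ1 _⟩

theorem offDiagonal_mem_imΓ₂ {ε : R} (hΦε : ∀ x y, Φ x y = ε * Φ y x)
    (hξs : ∀ w' x, Φ (ξs w') x = Bp w' (ξ x)) (hυ1 : ∀ w, ξ (ξs (υ w)) = w)
    {C : Module.End R X} (hC : Φ.IsSkewAdjoint C) :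
    (1 - perpProj ξ ξs υ) * C * perpProj ξ ξs υ + perpProj ξ ξs υ * C * (1 - perpProj ξ ξs υ) ∈
      imΓ₂ Bp Φ ξ ξs υ := by
  refine ⟨((1 - perpProj ξ ξs υ) * C) ∘ₗ ξs, -(ξ ∘ₗ (C * (1 - perpProj ξ ξs υ))),
    fun _ => one_sub_perpProj_apply_mem_ker hυ1 _, fun w' x => ?_, ?_⟩
  · simp only [LinearMap.comp_apply, Module.End.mul_apply, LinearMap.neg_apply, map_neg,
      one_sub_perpProj_isSelfAdjoint hΦε hξs hυ1 _ x, hC _ _, Pi.neg_apply, hξs]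
  · rw [LinearMap.comp_neg, LinearMap.comp_neg, sub_neg_eq_add]
    rfl

theorem exists_mem_𝔥E_mem_𝔥EPerp_mem_imΓ₂ {ε : R} (hΦε : ∀ x y, Φ x y = ε * Φ y x)
    (hEnd : ∀ x ∈ ker ξ, x ∈ leftOrthogonal Φ (ker ξ) → x = 0)
    (hξs : ∀ w' x, Φ (ξs w') x = Bp w' (ξ x)) (hυ1 : ∀ w, ξ (ξs (υ w)) = w)
    {C : Module.End R X} (hC : Φ.IsSkewAdjoint C) :
    ∃ B₁ ∈ 𝔥E Φ (ker ξ), ∃ B₂ ∈ 𝔥EPerp Φ (ker ξ), ∃ B₃ ∈ imΓ₂ Bp Φ ξ ξs υ,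
      C = B₁ + B₂ + B₃ :=
  ⟨_, perpProj_mul_mul_perpProj_mem_𝔥E hΦε hξs hυ1 hC,
    _, one_sub_perpProj_mul_mul_one_sub_perpProj_mem_𝔥EPerp hΦε hEnd hξs hυ1 hC,
    _, offDiagonal_mem_imΓ₂ hΦε hξs hυ1 hC, by noncomm_ring⟩

theorem mul_perpProj_of_mem_𝔥E (hυ1 : ∀ w, ξ (ξs (υ w)) = w) {B : Module.End R X}
    (hB : B ∈ 𝔥E Φ (ker ξ)) : B * perpProj ξ ξs υ = B := by
  ext x
  have h := hB.2.1 _ (one_sub_perpProj_apply_mem_ker hυ1 x)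
  rw [LinearMap.sub_apply, Module.End.one_apply, map_sub, sub_eq_zero] at h
  exact h.symm

theorem perpProj_mul_of_mem_𝔥E (hEnd : ∀ x ∈ ker ξ, x ∈ leftOrthogonal Φ (ker ξ) → x = 0)
    (hξs : ∀ w' x, Φ (ξs w') x = Bp w' (ξ x)) (hυ1 : ∀ w, ξ (ξs (υ w)) = w)
    {B : Module.End R X} (hB : B ∈ 𝔥E Φ (ker ξ)) : perpProj ξ ξs υ * B = B := by
  ext x
  rw [Module.End.mul_apply, ← mul_perpProj_of_mem_𝔥E hυ1 hB]
  exact perpProj_apply_of_mem_leftOrthogonal hEnd hξs hυ1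
    (hB.2.2 _ (perpProj_apply_mem_leftOrthogonal hξs x))

theorem mul_perpProj_of_mem_𝔥EPerp (hξs : ∀ w' x, Φ (ξs w') x = Bp w' (ξ x))
    {B : Module.End R X} (hB : B ∈ 𝔥EPerp Φ (ker ξ)) : B * perpProj ξ ξs υ = 0 := by
  ext x
  exact hB.2.1 _ (perpProj_apply_mem_leftOrthogonal hξs x)

theorem perpProj_mul_of_mem_𝔥EPerp (hξs : ∀ w' x, Φ (ξs w') x = Bp w' (ξ x))
    (hυ1 : ∀ w, ξ (ξs (υ w)) = w) {B : Module.End R X} (hB : B ∈ 𝔥EPerp Φ (ker ξ)) :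
    perpProj ξ ξs υ * B = 0 := by
  have h : B = B * (1 - perpProj ξ ξs υ) := by
    rw [mul_sub, mul_one, mul_perpProj_of_mem_𝔥EPerp hξs hB, sub_zero]
  rw [h, ← mul_assoc]
  ext x
  exact perpProj_apply_of_mem_ker (hB.2.2 _ (one_sub_perpProj_apply_mem_ker hυ1 x))

theorem perpProj_mul_mul_perpProj_of_mem_imΓ₂ {ε : R} (hΦε : ∀ x y, Φ x y = ε * Φ y x)
    (hξs : ∀ w' x, Φ (ξs w') x = Bp w' (ξ x)) (hυ1 : ∀ w, ξ (ξs (υ w)) = w)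
    (hBp2 : ∀ w, (∀ w', Bp w' w = 0) → w = 0) {B : Module.End R X}
    (hB : B ∈ imΓ₂ Bp Φ ξ ξs υ) : perpProj ξ ξs υ * B * perpProj ξ ξs υ = 0 := by
  obtain ⟨A, As, hA, hAAs, rfl⟩ := hB
  have hAsP : ∀ x, As (perpProj ξ ξs υ x) = 0 := fun x => hBp2 _ fun w' => by
    rw [← hAAs, ← perpProj_isSelfAdjoint hΦε hξs hυ1, perpProj_apply_of_mem_ker (hA w'),
      map_zero, LinearMap.zero_apply]
  ext x
  simp only [Module.End.mul_apply, LinearMap.sub_apply, LinearMap.comp_apply, hAsP, map_zero,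
    sub_zero, perpProj_apply_of_mem_ker (hA _), LinearMap.zero_apply]

theorem one_sub_perpProj_mul_mul_one_sub_perpProj_of_mem_imΓ₂
    (hυ1 : ∀ w, ξ (ξs (υ w)) = w) (hυ2 : ∀ w', υ (ξ (ξs w')) = w') {B : Module.End R X}
    (hB : B ∈ imΓ₂ Bp Φ ξ ξs υ) :
    (1 - perpProj ξ ξs υ) * B * (1 - perpProj ξ ξs υ) = 0 := by
  obtain ⟨A, As, -, -, rfl⟩ := hB
  ext x
  have hξ : ξ (x - perpProj ξ ξs υ x) = 0 := one_sub_perpProj_apply_mem_ker hυ1 x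
  simp only [Module.End.mul_apply, LinearMap.sub_apply, Module.End.one_apply,
    LinearMap.comp_apply, hξ, map_zero, zero_sub, map_neg, perpProj_apply_ξs hυ2, sub_self,
    neg_zero, LinearMap.zero_apply]

theorem compress_add_add_of_mem {ε : R} (hΦε : ∀ x y, Φ x y = ε * Φ y x)
    (hEnd : ∀ x ∈ ker ξ, x ∈ leftOrthogonal Φ (ker ξ) → x = 0)
    (hξs : ∀ w' x, Φ (ξs w') x = Bp w' (ξ x)) (hυ1 : ∀ w, ξ (ξs (υ w)) = w)
    (hυ2 : ∀ w', υ (ξ (ξs w')) = w') (hBp2 : ∀ w, (∀ w', Bp w' w = 0) → w = 0)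
    {B₁ B₂ B₃ : Module.End R X} (h₁ : B₁ ∈ 𝔥E Φ (ker ξ)) (h₂ : B₂ ∈ 𝔥EPerp Φ (ker ξ))
    (h₃ : B₃ ∈ imΓ₂ Bp Φ ξ ξs υ) :
    perpProj ξ ξs υ * (B₁ + B₂ + B₃) * perpProj ξ ξs υ = B₁ ∧
      (1 - perpProj ξ ξs υ) * (B₁ + B₂ + B₃) * (1 - perpProj ξ ξs υ) = B₂ := by
  set P := perpProj ξ ξs υ
  have hB₁P : B₁ * P = B₁ := mul_perpProj_of_mem_𝔥E hυ1 h₁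
  have hB₂P : B₂ * P = 0 := mul_perpProj_of_mem_𝔥EPerp hξs h₂
  have e₁ : P * B₁ * P = B₁ := by rw [mul_assoc, hB₁P, perpProj_mul_of_mem_𝔥E hEnd hξs hυ1 h₁]
  have e₂ : P * B₂ * P = 0 := by rw [mul_assoc, hB₂P, mul_zero]
  have f₁ : (1 - P) * B₁ * (1 - P) = 0 := by
    rw [mul_assoc, mul_sub, mul_one, hB₁P, sub_self, mul_zero]
  have f₂ : (1 - P) * B₂ * (1 - P) = B₂ := by
    rw [sub_mul, one_mul, perpProj_mul_of_mem_𝔥EPerp hξs hυ1 h₂, sub_zero, mul_sub, mul_one, hB₂P,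
      sub_zero]
  have e₃ : P * B₃ * P = 0 := perpProj_mul_mul_perpProj_of_mem_imΓ₂ hΦε hξs hυ1 hBp2 h₃
  have f₃ : (1 - P) * B₃ * (1 - P) = 0 :=
    one_sub_perpProj_mul_mul_one_sub_perpProj_of_mem_imΓ₂ hυ1 hυ2 h₃
  simp only [mul_add, add_mul, e₁, e₂, e₃, f₁, f₂, f₃, add_zero, zero_add, and_self]

theorem eq_of_add_add_eq {ε : R} (hΦε : ∀ x y, Φ x y = ε * Φ y x)
    (hEnd : ∀ x ∈ ker ξ, x ∈ leftOrthogonal Φ (ker ξ) → x = 0)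
    (hξs : ∀ w' x, Φ (ξs w') x = Bp w' (ξ x)) (hυ1 : ∀ w, ξ (ξs (υ w)) = w)
    (hυ2 : ∀ w', υ (ξ (ξs w')) = w') (hBp2 : ∀ w, (∀ w', Bp w' w = 0) → w = 0)
    {B₁ B₂ B₃ B₁' B₂' B₃' : Module.End R X} (h₁ : B₁ ∈ 𝔥E Φ (ker ξ))
    (h₁' : B₁' ∈ 𝔥E Φ (ker ξ)) (h₂ : B₂ ∈ 𝔥EPerp Φ (ker ξ)) (h₂' : B₂' ∈ 𝔥EPerp Φ (ker ξ))
    (h₃ : B₃ ∈ imΓ₂ Bp Φ ξ ξs υ) (h₃' : B₃' ∈ imΓ₂ Bp Φ ξ ξs υ)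
    (h : B₁ + B₂ + B₃ = B₁' + B₂' + B₃') : B₁ = B₁' ∧ B₂ = B₂' ∧ B₃ = B₃' := by
  obtain ⟨e₁, e₂⟩ := compress_add_add_of_mem hΦε hEnd hξs hυ1 hυ2 hBp2 h₁ h₂ h₃
  obtain ⟨e₁', e₂'⟩ := compress_add_add_of_mem hΦε hEnd hξs hυ1 hυ2 hBp2 h₁' h₂' h₃'
  rw [h, e₁'] at e₁
  rw [h, e₂'] at e₂
  subst e₁ e₂
  exact ⟨rfl, rfl, add_left_cancel h⟩

end

theorem h_decomposition_general
    (F : Type*) [Field F]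
    (W W' X : Type*)
    [AddCommGroup W] [Module F W]
    [AddCommGroup W'] [Module F W']
    [AddCommGroup X] [Module F X]
    (ε : F)
    (Bp : W' →ₗ[F] W →ₗ[F] F)
    (hBp2 : ∀ w : W, (∀ w' : W', Bp w' w = 0) → w = 0)
    (Φ : X →ₗ[F] X →ₗ[F] F)
    (hΦε : ∀ x y : X, Φ x y = ε * Φ y x)
    (ξ : X →ₗ[F] W)
    (hEnd : ∀ x ∈ LinearMap.ker ξ, (∀ y ∈ LinearMap.ker ξ, Φ x y = 0) → x = 0)
    (ξs : W' →ₗ[F] X)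
    (hξs : ∀ (w' : W') (x : X), Φ (ξs w') x = Bp w' (ξ x))
    (υ : W →ₗ[F] W')
    (hυ1 : ∀ w : W, ξ (ξs (υ w)) = w) (hυ2 : ∀ w' : W', υ (ξ (ξs w')) = w') :
    -- abbreviations: skewness, membership in 𝔥^E, 𝔥^{E^⊥}, and im Γ₂
    ∀ C : X →ₗ[F] X, (∀ x y : X, Φ (C x) y + Φ x (C y) = 0) →
      (∃ B₁ B₂ B₃ : X →ₗ[F] X,
        -- B₁ ∈ 𝔥^E
        ((∀ x y : X, Φ (B₁ x) y + Φ x (B₁ y) = 0) ∧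
          (∀ e ∈ LinearMap.ker ξ, B₁ e = 0) ∧
          (∀ x : X, (∀ y ∈ LinearMap.ker ξ, Φ x y = 0) →
            ∀ y ∈ LinearMap.ker ξ, Φ (B₁ x) y = 0)) ∧
        -- B₂ ∈ 𝔥^{E^⊥}
        ((∀ x y : X, Φ (B₂ x) y + Φ x (B₂ y) = 0) ∧
          (∀ x : X, (∀ y ∈ LinearMap.ker ξ, Φ x y = 0) → B₂ x = 0) ∧
          (∀ e ∈ LinearMap.ker ξ, B₂ e ∈ LinearMap.ker ξ)) ∧
        -- B₃ ∈ im Γ₂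
        (∃ (A : W' →ₗ[F] X) (As : X →ₗ[F] W),
          (∀ w' : W', A w' ∈ LinearMap.ker ξ) ∧
          (∀ (w' : W') (x : X), Φ (A w') x = Bp w' (As x)) ∧
          B₃ = A ∘ₗ υ ∘ₗ ξ - ξs ∘ₗ υ ∘ₗ As) ∧
        C = B₁ + B₂ + B₃) ∧
      -- uniqueness of the decomposition
      (∀ B₁ B₂ B₃ B₁' B₂' B₃' : X →ₗ[F] X,
        ((∀ x y : X, Φ (B₁ x) y + Φ x (B₁ y) = 0) ∧
          (∀ e ∈ LinearMap.ker ξ, B₁ e = 0) ∧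
          (∀ x : X, (∀ y ∈ LinearMap.ker ξ, Φ x y = 0) →
            ∀ y ∈ LinearMap.ker ξ, Φ (B₁ x) y = 0)) →
        ((∀ x y : X, Φ (B₁' x) y + Φ x (B₁' y) = 0) ∧
          (∀ e ∈ LinearMap.ker ξ, B₁' e = 0) ∧
          (∀ x : X, (∀ y ∈ LinearMap.ker ξ, Φ x y = 0) →
            ∀ y ∈ LinearMap.ker ξ, Φ (B₁' x) y = 0)) →
        ((∀ x y : X, Φ (B₂ x) y + Φ x (B₂ y) = 0) ∧
          (∀ x : X, (∀ y ∈ LinearMap.ker ξ, Φ x y = 0) → B₂ x = 0) ∧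
          (∀ e ∈ LinearMap.ker ξ, B₂ e ∈ LinearMap.ker ξ)) →
        ((∀ x y : X, Φ (B₂' x) y + Φ x (B₂' y) = 0) ∧
          (∀ x : X, (∀ y ∈ LinearMap.ker ξ, Φ x y = 0) → B₂' x = 0) ∧
          (∀ e ∈ LinearMap.ker ξ, B₂' e ∈ LinearMap.ker ξ)) →
        (∃ (A : W' →ₗ[F] X) (As : X →ₗ[F] W),
          (∀ w' : W', A w' ∈ LinearMap.ker ξ) ∧
          (∀ (w' : W') (x : X), Φ (A w') x = Bp w' (As x)) ∧
          B₃ = A ∘ₗ υ ∘ₗ ξ - ξs ∘ₗ υ ∘ₗ As) →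
        (∃ (A : W' →ₗ[F] X) (As : X →ₗ[F] W),
          (∀ w' : W', A w' ∈ LinearMap.ker ξ) ∧
          (∀ (w' : W') (x : X), Φ (A w') x = Bp w' (As x)) ∧
          B₃' = A ∘ₗ υ ∘ₗ ξ - ξs ∘ₗ υ ∘ₗ As) →
        B₁ + B₂ + B₃ = B₁' + B₂' + B₃' →
        B₁ = B₁' ∧ B₂ = B₂' ∧ B₃ = B₃') := by
  intro C hC
  refine ⟨?_, fun B₁ B₂ B₃ B₁' B₂' B₃' h₁ h₁' h₂ h₂' h₃ h₃' => ?_⟩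
  · obtain ⟨B₁, h₁, B₂, h₂, B₃, h₃, hC⟩ :=
      exists_mem_𝔥E_mem_𝔥EPerp_mem_imΓ₂ hΦε hEnd hξs hυ1 (LinearMap.isSkewAdjoint_iff.2 hC)
    exact ⟨B₁, B₂, B₃, ⟨LinearMap.isSkewAdjoint_iff.1 h₁.1, h₁.2⟩,
      ⟨LinearMap.isSkewAdjoint_iff.1 h₂.1, h₂.2⟩, h₃, hC⟩
  · exact eq_of_add_add_eq hΦε hEnd hξs hυ1 hυ2 hBp2
      ⟨LinearMap.isSkewAdjoint_iff.2 h₁.1, h₁.2⟩ ⟨LinearMap.isSkewAdjoint_iff.2 h₁'.1, h₁'.2⟩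
      ⟨LinearMap.isSkewAdjoint_iff.2 h₂.1, h₂.2⟩ ⟨LinearMap.isSkewAdjoint_iff.2 h₂'.1, h₂'.2⟩ h₃ h₃'

/-- The decomposition `𝔥 = 𝔥^E ⊕ 𝔥^{E^⊥} ⊕ im Γ₂` of the Lie algebra of
`H = Isom(X, Φ)`, where `𝔥^E` (resp. `𝔥^{E^⊥}`) consists of skew operators vanishing on
`E = ker ξ` and preserving `E^⊥` (resp. vice versa), and
`Γ₂(A) = A (ξξ*)⁻¹ ξ − ξ* (ξξ*)⁻¹ A*` for `A ∈ Hom(W', E)`.  Every skew `C` decomposes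
uniquely as a sum of elements of the three pieces. -/
theorem h_decomposition
    (F : Type*) [Field F] (hchar : (2 : F) ≠ 0)
    (W W' X : Type*)
    [AddCommGroup W] [Module F W] [FiniteDimensional F W]
    [AddCommGroup W'] [Module F W'] [FiniteDimensional F W']
    [AddCommGroup X] [Module F X] [FiniteDimensional F X]
    (ε : F) (hε : ε = 1 ∨ ε = -1)
    (Bp : W' →ₗ[F] W →ₗ[F] F)
    (hBp1 : ∀ w' : W', (∀ w : W, Bp w' w = 0) → w' = 0)
    (hBp2 : ∀ w : W, (∀ w' : W', Bp w' w = 0) → w = 0)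
    (Φ : X →ₗ[F] X →ₗ[F] F)
    (hΦnd : ∀ x : X, (∀ y : X, Φ x y = 0) → x = 0)
    (hΦε : ∀ x y : X, Φ x y = ε * Φ y x)
    (ξ : X →ₗ[F] W) (hξsurj : Function.Surjective ξ)
    (hEnd : ∀ x ∈ LinearMap.ker ξ, (∀ y ∈ LinearMap.ker ξ, Φ x y = 0) → x = 0)
    (ξs : W' →ₗ[F] X)
    (hξs : ∀ (w' : W') (x : X), Φ (ξs w') x = Bp w' (ξ x))
    (υ : W →ₗ[F] W')
    (hυ1 : ∀ w : W, ξ (ξs (υ w)) = w) (hυ2 : ∀ w' : W', υ (ξ (ξs w')) = w') :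
    -- abbreviations: skewness, membership in 𝔥^E, 𝔥^{E^⊥}, and im Γ₂
    ∀ C : X →ₗ[F] X, (∀ x y : X, Φ (C x) y + Φ x (C y) = 0) →
      (∃ B₁ B₂ B₃ : X →ₗ[F] X,
        -- B₁ ∈ 𝔥^E
        ((∀ x y : X, Φ (B₁ x) y + Φ x (B₁ y) = 0) ∧
          (∀ e ∈ LinearMap.ker ξ, B₁ e = 0) ∧
          (∀ x : X, (∀ y ∈ LinearMap.ker ξ, Φ x y = 0) →
            ∀ y ∈ LinearMap.ker ξ, Φ (B₁ x) y = 0)) ∧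
        -- B₂ ∈ 𝔥^{E^⊥}
        ((∀ x y : X, Φ (B₂ x) y + Φ x (B₂ y) = 0) ∧
          (∀ x : X, (∀ y ∈ LinearMap.ker ξ, Φ x y = 0) → B₂ x = 0) ∧
          (∀ e ∈ LinearMap.ker ξ, B₂ e ∈ LinearMap.ker ξ)) ∧
        -- B₃ ∈ im Γ₂
        (∃ (A : W' →ₗ[F] X) (As : X →ₗ[F] W),
          (∀ w' : W', A w' ∈ LinearMap.ker ξ) ∧
          (∀ (w' : W') (x : X), Φ (A w') x = Bp w' (As x)) ∧
          B₃ = A ∘ₗ υ ∘ₗ ξ - ξs ∘ₗ υ ∘ₗ As) ∧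
        C = B₁ + B₂ + B₃) ∧
      -- uniqueness of the decomposition
      (∀ B₁ B₂ B₃ B₁' B₂' B₃' : X →ₗ[F] X,
        ((∀ x y : X, Φ (B₁ x) y + Φ x (B₁ y) = 0) ∧
          (∀ e ∈ LinearMap.ker ξ, B₁ e = 0) ∧
          (∀ x : X, (∀ y ∈ LinearMap.ker ξ, Φ x y = 0) →
            ∀ y ∈ LinearMap.ker ξ, Φ (B₁ x) y = 0)) →
        ((∀ x y : X, Φ (B₁' x) y + Φ x (B₁' y) = 0) ∧
          (∀ e ∈ LinearMap.ker ξ, B₁' e = 0) ∧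
          (∀ x : X, (∀ y ∈ LinearMap.ker ξ, Φ x y = 0) →
            ∀ y ∈ LinearMap.ker ξ, Φ (B₁' x) y = 0)) →
        ((∀ x y : X, Φ (B₂ x) y + Φ x (B₂ y) = 0) ∧
          (∀ x : X, (∀ y ∈ LinearMap.ker ξ, Φ x y = 0) → B₂ x = 0) ∧
          (∀ e ∈ LinearMap.ker ξ, B₂ e ∈ LinearMap.ker ξ)) →
        ((∀ x y : X, Φ (B₂' x) y + Φ x (B₂' y) = 0) ∧
          (∀ x : X, (∀ y ∈ LinearMap.ker ξ, Φ x y = 0) → B₂' x = 0) ∧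
          (∀ e ∈ LinearMap.ker ξ, B₂' e ∈ LinearMap.ker ξ)) →
        (∃ (A : W' →ₗ[F] X) (As : X →ₗ[F] W),
          (∀ w' : W', A w' ∈ LinearMap.ker ξ) ∧
          (∀ (w' : W') (x : X), Φ (A w') x = Bp w' (As x)) ∧
          B₃ = A ∘ₗ υ ∘ₗ ξ - ξs ∘ₗ υ ∘ₗ As) →
        (∃ (A : W' →ₗ[F] X) (As : X →ₗ[F] W),
          (∀ w' : W', A w' ∈ LinearMap.ker ξ) ∧
          (∀ (w' : W') (x : X), Φ (A w') x = Bp w' (As x)) ∧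
          B₃' = A ∘ₗ υ ∘ₗ ξ - ξs ∘ₗ υ ∘ₗ As) →
        B₁ + B₂ + B₃ = B₁' + B₂' + B₃' →
        B₁ = B₁' ∧ B₂ = B₂' ∧ B₃ = B₃') :=
  h_decomposition_general F W W' X ε Bp hBp2 Φ hΦε ξ hEnd ξs hξs υ hυ1 hυ2
end

section
/- Define φ : m → n by φ(A, B) = u(Aξ, ξBξ*), where m = gl(W) ⊕ h is the Lie algebra of M and n = {u(A₀,B₀) : A₀ : X → W, B₀ : W' → W with B₀* + B₀ = 0} is the Lie algebra of the unipotent radical N. Let n_ξ = {u(A₀, B₀) ∈ n : E ⊆ ker A₀}, and let i₂ : κ → m be B ↦ (0, B) with κ = {B ∈ h : B(E^⊥) ⊆ E}. Then the sequence 0 → κ → m → n_ξ → 0 (with maps i₂ and φ) is exact: φ is surjective onto n_ξ with kernel exactly i₂(κ). -/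
/-!
Adjointness, `Φ (ξ* w') x = ⟨w', ξ x⟩`, turns `⟨w₁', ξ B ξ* w₂'⟩` into `Φ (ξ* w₁', B ξ* w₂')`, so the
skewness of `B` passes to `ξ B ξ*`. Since `ξ* W' ⊆ E^⊥`, skewness also shows that `ξ B ξ* = 0` says
exactly that `B` maps `E^⊥` into `E = ker ξ`. For surjectivity, `A₀` factors through the surjection
`ξ` because it kills `ker ξ`; given a skew `B₀`, take a left inverse `p` of the injective map `ξ*`
and let `B` be the operator with `Φ (B x) y = -⟨p x, B₀ (p y)⟩`, which exists because `Φ` is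
nondegenerate. Then `B` is skew because `B₀` is, and `ξ B ξ* = B₀` because `p ξ* = 1`.
-/

open LinearMap

section CommRing

variable {R X W W' P : Type*} [CommRing R] [AddCommGroup X] [Module R X]
  [AddCommGroup W] [Module R W] [AddCommGroup W'] [Module R W'] [AddCommGroup P] [Module R P]

def IsInfinitesimalIsometry (Φ : X →ₗ[R] X →ₗ[R] R) (B : X →ₗ[R] X) : Prop :=
  ∀ x y, Φ (B x) y + Φ x (B y) = 0

def IsSkewHermitian (Bp : W' →ₗ[R] W →ₗ[R] R) (ε : R) (B₀ : W' →ₗ[R] W) : Prop :=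
  ∀ w₁ w₂, Bp w₁ (B₀ w₂) + ε * Bp w₂ (B₀ w₁) = 0

theorem LinearMap.exists_eq_comp_of_ker_le_ker {ξ : X →ₗ[R] W} (hξ : Function.Surjective ξ)
    {f : X →ₗ[R] P} (hf : ker ξ ≤ ker f) : ∃ g : W →ₗ[R] P, f = g ∘ₗ ξ :=
  ⟨(ker ξ).liftQ f hf ∘ₗ (ξ.quotKerEquivOfSurjective hξ).symm.toLinearMap, by
    ext x
    have : (ξ.quotKerEquivOfSurjective hξ).symm (ξ x) = (ker ξ).mkQ x :=
      (LinearEquiv.symm_apply_eq _).mpr rfl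
    simp [this]⟩

theorem LinearMap.comp_eq_zero_iff_of_surjective {ξ : X →ₗ[R] W} (hξ : Function.Surjective ξ)
    {f : W →ₗ[R] P} : f ∘ₗ ξ = 0 ↔ f = 0 := by
  simpa using cancel_right hξ (f := f) (f' := 0)

variable {Φ : X →ₗ[R] X →ₗ[R] R} {Bp : W' →ₗ[R] W →ₗ[R] R} {ε : R} {ξ : X →ₗ[R] W}
  {ξs : W' →ₗ[R] X}

theorem ker_eq_bot_of_adjoint_of_surjective (hξs : ∀ w' x, Φ (ξs w') x = Bp w' (ξ x))
    (hBp : Bp.SeparatingLeft) (hξ : Function.Surjective ξ) : ker ξs = ⊥ := by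
  refine (ker_eq_bot').mpr fun w' hw' => hBp w' fun w => ?_
  obtain ⟨x, rfl⟩ := hξ w
  rw [← hξs, hw', map_zero, LinearMap.zero_apply]

namespace IsInfinitesimalIsometry

variable {B : X →ₗ[R] X}

theorem isSkewHermitian_comp_comp (hΦε : ∀ x y, Φ x y = ε * Φ y x)
    (hξs : ∀ w' x, Φ (ξs w') x = Bp w' (ξ x)) (hB : IsInfinitesimalIsometry Φ B) :
    IsSkewHermitian Bp ε (ξ ∘ₗ B ∘ₗ ξs) := by
  intro w₁ w₂
  simp only [comp_apply, ← hξs]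
  linear_combination hΦε (ξs w₁) (B (ξs w₂)) + ε * hB (ξs w₂) (ξs w₁)

theorem comp_comp_eq_zero_iff (hΦε : ∀ x y, Φ x y = ε * Φ y x)
    (hξs : ∀ w' x, Φ (ξs w') x = Bp w' (ξ x)) (hBp : Bp.SeparatingRight)
    (hB : IsInfinitesimalIsometry Φ B) :
    ξ ∘ₗ B ∘ₗ ξs = 0 ↔ ∀ x, (∀ y ∈ ker ξ, Φ x y = 0) → B x ∈ ker ξ := by
  constructor
  · intro h x hx
    refine hBp _ fun w' => ?_
    have hBξs : B (ξs w') ∈ ker ξ := LinearMap.congr_fun h w'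
    rw [← hξs]
    linear_combination hB (ξs w') x - hΦε (B (ξs w')) x - ε * hx _ hBξs
  · intro h
    ext w'
    exact h _ fun y hy => by rw [hξs, mem_ker.mp hy, map_zero]

end IsInfinitesimalIsometry

end CommRing

theorem exists_isInfinitesimalIsometry_comp_comp_eq {K X W W' : Type*} [Field K]
    [AddCommGroup X] [Module K X] [FiniteDimensional K X] [AddCommGroup W] [Module K W]
    [AddCommGroup W'] [Module K W'] {Φ : X →ₗ[K] X →ₗ[K] K} {Bp : W' →ₗ[K] W →ₗ[K] K} {ε : K}
    {ξ : X →ₗ[K] W} {ξs : W' →ₗ[K] X} (hΦ : Φ.SeparatingLeft) (hΦε : ∀ x y, Φ x y = ε * Φ y x)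
    (hξs : ∀ w' x, Φ (ξs w') x = Bp w' (ξ x)) (hξs_inj : ker ξs = ⊥) (hBp : Bp.SeparatingRight)
    {B₀ : W' →ₗ[K] W} (hB₀ : IsSkewHermitian Bp ε B₀) :
    ∃ B, IsInfinitesimalIsometry Φ B ∧ ξ ∘ₗ B ∘ₗ ξs = B₀ := by
  let p := ξs.leftInverse
  have hp : ∀ w', p (ξs w') = w' := leftInverse_apply_of_inj hξs_inj
  let B := LinearMap.BilinForm.symmCompOfNondegenerate (-(Bp.compl₂ B₀).compl₁₂ p p) Φ
    (.ofSeparatingLeft hΦ)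
  have hΦB : ∀ x y, Φ (B x) y = -Bp (p x) (B₀ (p y)) := by simp [B]
  have hB : IsInfinitesimalIsometry Φ B := fun x y => by
    rw [hΦε x, hΦB, hΦB]
    linear_combination -hB₀ (p x) (p y)
  refine ⟨B, hB, ?_⟩
  ext w'
  rw [← sub_eq_zero]
  refine hBp _ fun w₁ => ?_
  rw [map_sub, comp_apply, comp_apply, ← hξs]
  have hΦBξs : Φ (B (ξs w₁)) (ξs w') = -Bp w₁ (B₀ w') := by rw [hΦB, hp, hp]
  linear_combination hB (ξs w₁) (ξs w') - hΦBξs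

theorem m_exact_sequence_general
    (F : Type*) [Field F]
    (W W' X : Type*)
    [AddCommGroup W] [Module F W]
    [AddCommGroup W'] [Module F W']
    [AddCommGroup X] [Module F X] [FiniteDimensional F X]
    (ε : F)
    (Bp : W' →ₗ[F] W →ₗ[F] F)
    (hBp1 : ∀ w' : W', (∀ w : W, Bp w' w = 0) → w' = 0)
    (hBp2 : ∀ w : W, (∀ w' : W', Bp w' w = 0) → w = 0)
    (Φ : X →ₗ[F] X →ₗ[F] F)
    (hΦnd : ∀ x : X, (∀ y : X, Φ x y = 0) → x = 0)
    (hΦε : ∀ x y : X, Φ x y = ε * Φ y x)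
    (ξ : X →ₗ[F] W) (hξsurj : Function.Surjective ξ)
    (ξs : W' →ₗ[F] X)
    (hξs : ∀ (w' : W') (x : X), Φ (ξs w') x = Bp w' (ξ x)) :
    -- φ maps 𝔪 into 𝔫_ξ : the second component is skew and the first kills E
    (∀ (A : W →ₗ[F] W) (B : X →ₗ[F] X),
      (∀ x y : X, Φ (B x) y + Φ x (B y) = 0) →
      (∀ w₁' w₂' : W',
        Bp w₁' ((ξ ∘ₗ B ∘ₗ ξs) w₂') + ε * Bp w₂' ((ξ ∘ₗ B ∘ₗ ξs) w₁') = 0) ∧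
      (∀ e ∈ LinearMap.ker ξ, (A ∘ₗ ξ) e = 0)) ∧
    -- the kernel of φ is i₂(κ)
    (∀ (A : W →ₗ[F] W) (B : X →ₗ[F] X),
      (∀ x y : X, Φ (B x) y + Φ x (B y) = 0) →
      ((A ∘ₗ ξ = 0 ∧ ξ ∘ₗ B ∘ₗ ξs = 0) ↔
        (A = 0 ∧ ∀ x : X, (∀ y ∈ LinearMap.ker ξ, Φ x y = 0) →
          B x ∈ LinearMap.ker ξ))) ∧
    -- φ is surjective onto 𝔫_ξ
    (∀ (A₀ : X →ₗ[F] W) (B₀ : W' →ₗ[F] W),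
      (∀ w₁' w₂' : W', Bp w₁' (B₀ w₂') + ε * Bp w₂' (B₀ w₁') = 0) →
      (∀ e ∈ LinearMap.ker ξ, A₀ e = 0) →
      ∃ (A : W →ₗ[F] W) (B : X →ₗ[F] X),
        (∀ x y : X, Φ (B x) y + Φ x (B y) = 0) ∧
        A₀ = A ∘ₗ ξ ∧ B₀ = ξ ∘ₗ B ∘ₗ ξs) := by
  refine ⟨fun A B hB => ?_, fun A B hB => ?_, fun A₀ B₀ hB₀ hA₀ => ?_⟩
  · exact ⟨IsInfinitesimalIsometry.isSkewHermitian_comp_comp hΦε hξs hB,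
      fun e he => by simp [mem_ker.mp he]⟩
  · exact and_congr (comp_eq_zero_iff_of_surjective hξsurj)
      (IsInfinitesimalIsometry.comp_comp_eq_zero_iff hΦε hξs hBp2 hB)
  · obtain ⟨A, hA⟩ := exists_eq_comp_of_ker_le_ker hξsurj hA₀
    obtain ⟨B, hB, hBB₀⟩ := exists_isInfinitesimalIsometry_comp_comp_eq hΦnd hΦε hξs
      (ker_eq_bot_of_adjoint_of_surjective hξs hBp1 hξsurj) hBp2 hB₀
    exact ⟨A, B, hB, hA, hBB₀.symm⟩

/-- The exact sequence for `𝔪`: the map `φ : 𝔪 → 𝔫`, `φ(A, B) = u(A ξ, ξ B ξ*)`, from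
the Lie algebra `𝔪 = 𝔤𝔩(W) ⊕ 𝔥` of the Levi to the Lie algebra `𝔫` of the unipotent
radical, has image exactly `𝔫_ξ = {u(A₀, B₀) ∈ 𝔫 : E ⊆ ker A₀}` and kernel exactly
`i₂(κ) = {(0, B) : B ∈ κ}`, i.e. `0 → κ → 𝔪 → 𝔫_ξ → 0` is exact.  An element
`u(A₀, B₀)` of `𝔫` is a pair with `B₀* + B₀ = 0`, the skewness being
`Bp w₁' (B₀ w₂') + ε Bp w₂' (B₀ w₁') = 0`. -/
theorem m_exact_sequence
    (F : Type*) [Field F] (hchar : (2 : F) ≠ 0)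
    (W W' X : Type*)
    [AddCommGroup W] [Module F W] [FiniteDimensional F W]
    [AddCommGroup W'] [Module F W'] [FiniteDimensional F W']
    [AddCommGroup X] [Module F X] [FiniteDimensional F X]
    (ε : F) (hε : ε = 1 ∨ ε = -1)
    (Bp : W' →ₗ[F] W →ₗ[F] F)
    (hBp1 : ∀ w' : W', (∀ w : W, Bp w' w = 0) → w' = 0)
    (hBp2 : ∀ w : W, (∀ w' : W', Bp w' w = 0) → w = 0)
    (Φ : X →ₗ[F] X →ₗ[F] F)
    (hΦnd : ∀ x : X, (∀ y : X, Φ x y = 0) → x = 0)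
    (hΦε : ∀ x y : X, Φ x y = ε * Φ y x)
    (ξ : X →ₗ[F] W) (hξsurj : Function.Surjective ξ)
    (hEnd : ∀ x ∈ LinearMap.ker ξ, (∀ y ∈ LinearMap.ker ξ, Φ x y = 0) → x = 0)
    (ξs : W' →ₗ[F] X)
    (hξs : ∀ (w' : W') (x : X), Φ (ξs w') x = Bp w' (ξ x)) :
    -- φ maps 𝔪 into 𝔫_ξ : the second component is skew and the first kills E
    (∀ (A : W →ₗ[F] W) (B : X →ₗ[F] X),
      (∀ x y : X, Φ (B x) y + Φ x (B y) = 0) →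
      (∀ w₁' w₂' : W',
        Bp w₁' ((ξ ∘ₗ B ∘ₗ ξs) w₂') + ε * Bp w₂' ((ξ ∘ₗ B ∘ₗ ξs) w₁') = 0) ∧
      (∀ e ∈ LinearMap.ker ξ, (A ∘ₗ ξ) e = 0)) ∧
    -- the kernel of φ is i₂(κ)
    (∀ (A : W →ₗ[F] W) (B : X →ₗ[F] X),
      (∀ x y : X, Φ (B x) y + Φ x (B y) = 0) →
      ((A ∘ₗ ξ = 0 ∧ ξ ∘ₗ B ∘ₗ ξs = 0) ↔
        (A = 0 ∧ ∀ x : X, (∀ y ∈ LinearMap.ker ξ, Φ x y = 0) →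
          B x ∈ LinearMap.ker ξ))) ∧
    -- φ is surjective onto 𝔫_ξ
    (∀ (A₀ : X →ₗ[F] W) (B₀ : W' →ₗ[F] W),
      (∀ w₁' w₂' : W', Bp w₁' (B₀ w₂') + ε * Bp w₂' (B₀ w₁') = 0) →
      (∀ e ∈ LinearMap.ker ξ, A₀ e = 0) →
      ∃ (A : W →ₗ[F] W) (B : X →ₗ[F] X),
        (∀ x y : X, Φ (B x) y + Φ x (B y) = 0) ∧
        A₀ = A ∘ₗ ξ ∧ B₀ = ξ ∘ₗ B ∘ₗ ξs) :=
  m_exact_sequence_general F W W' X ε Bp hBp1 hBp2 Φ hΦnd hΦε ξ hξsurj ξs hξs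
end

section
/- With all notation as above, the map ψ : n → Hom(W', E), u(A₀, B₀) ↦ P_E ∘ A₀*, is a surjective linear map with kernel n_ξ, and the map ψ̃ : Hom(W', E) → n, A ↦ u(A* P_E, 0), is a linear section of ψ. Hence 0 → n_ξ → n → Hom(W', E) → 0 is a split exact sequence and n = n_ξ ⊕ im ψ̃. -/
/-!
Let `E = ker ξ`. Since `X = E ⊕ E^⊥` and `P_E` kills `E^⊥`, the projection `P_E` is self-adjoint
for `Φ`: `Φ (P_E a) x = Φ a (P_E x)`. Hence `P_E ∘ A₀*` is the adjoint of `A₀ ∘ P_E`, which vanishes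
iff `A₀|_E = 0` because `Bp` separates `W` and `Φ|_E` is nondegenerate. For the section, the
adjoint of `A* ∘ P_E` pairs with `E` exactly as `A` does, so projecting it to `E` recovers `A`.
-/

namespace LinearMap.BilinForm

variable {R M : Type*} [CommRing R] [AddCommGroup M] [Module R M]
  {B : LinearMap.BilinForm R M} {E : Submodule R M} {P : M →ₗ[R] M}

theorem eq_of_forall_mem_apply_eq (hE : (B.restrict E).SeparatingLeft) {a b : M}
    (ha : a ∈ E) (hb : b ∈ E) (h : ∀ y ∈ E, B a y = B b y) : a = b := by
  have hab : (⟨a, ha⟩ : E) - ⟨b, hb⟩ = 0 :=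
    hE _ fun y => by simp [h y y.2]
  simpa [sub_eq_zero] using hab

theorem apply_proj_right_of_mem (hB : B.IsRefl)
    (horth : ∀ x, ∀ y ∈ E, B (x - P x) y = 0) {a : M} (ha : a ∈ E) (x : M) :
    B a (P x) = B a x := by
  have h : B a (x - P x) = 0 := hB.eq_zero (horth x a ha)
  rw [map_sub, sub_eq_zero] at h
  exact h.symm

theorem apply_proj_left (hB : B.IsRefl) (hP : ∀ x, P x ∈ E)
    (horth : ∀ x, ∀ y ∈ E, B (x - P x) y = 0) (a x : M) :
    B (P a) x = B a (P x) := by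
  have h : B (a - P a) (P x) = 0 := horth a (P x) (hP x)
  rw [map_sub, LinearMap.sub_apply, sub_eq_zero] at h
  rw [h, apply_proj_right_of_mem hB horth (hP a)]

variable {W W' : Type*} [AddCommGroup W] [Module R W] [AddCommGroup W'] [Module R W']
  {Bp : W' →ₗ[R] W →ₗ[R] R}

theorem proj_comp_adjoint_eq_zero_iff (hB : B.IsRefl) (hP : IsProj E P)
    (horth : ∀ x, ∀ y ∈ E, B (x - P x) y = 0) (hBp : Bp.SeparatingRight)
    (hE : (B.restrict E).SeparatingLeft) {A : M →ₗ[R] W} {As : W' →ₗ[R] M}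
    (hAs : ∀ w' x, B (As w') x = Bp w' (A x)) :
    (∀ w', P (As w') = 0) ↔ ∀ e ∈ E, A e = 0 := by
  constructor
  · intro h e he
    refine hBp _ fun w' => ?_
    rw [← hAs, ← hP.map_id e he, ← apply_proj_left hB hP.map_mem horth, h, map_zero,
      LinearMap.zero_apply]
  · intro h w'
    refine eq_of_forall_mem_apply_eq hE (hP.map_mem _) E.zero_mem fun y hy => ?_
    rw [apply_proj_left hB hP.map_mem horth, hP.map_id y hy, hAs, h y hy, map_zero, map_zero,
      LinearMap.zero_apply]

theorem proj_comp_adjoint_comp_proj (hB : B.IsRefl) (hP : IsProj E P)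
    (horth : ∀ x, ∀ y ∈ E, B (x - P x) y = 0) (hE : (B.restrict E).SeparatingLeft)
    {A : W' →ₗ[R] M} (hA : ∀ w', A w' ∈ E) {As : M →ₗ[R] W}
    (hAs : ∀ w' x, B (A w') x = Bp w' (As x)) {Cs : W' →ₗ[R] M}
    (hCs : ∀ w' x, B (Cs w') x = Bp w' (As (P x))) (w' : W') :
    P (Cs w') = A w' :=
  eq_of_forall_mem_apply_eq hE (hP.map_mem _) (hA w') fun y hy => by
    rw [apply_proj_left hB hP.map_mem horth, hCs, hP.map_id y hy, hP.map_id y hy, hAs]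

end LinearMap.BilinForm

theorem n_split_exact_sequence_general
    (F : Type*) [Field F]
    (W W' X : Type*)
    [AddCommGroup W] [Module F W]
    [AddCommGroup W'] [Module F W']
    [AddCommGroup X] [Module F X]
    (ε : F)
    (Bp : W' →ₗ[F] W →ₗ[F] F)
    (hBp2 : ∀ w : W, (∀ w' : W', Bp w' w = 0) → w = 0)
    (Φ : X →ₗ[F] X →ₗ[F] F)
    (hΦε : ∀ x y : X, Φ x y = ε * Φ y x)
    (ξ : X →ₗ[F] W)
    (hEnd : ∀ x ∈ LinearMap.ker ξ, (∀ y ∈ LinearMap.ker ξ, Φ x y = 0) → x = 0)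
    (PE PEo : X →ₗ[F] X)
    (hPsum : PE + PEo = LinearMap.id)
    (hPE1 : ∀ x : X, PE x ∈ LinearMap.ker ξ)
    (hPE2 : ∀ x ∈ LinearMap.ker ξ, PE x = x)
    (hPEo : ∀ x : X, ∀ y ∈ LinearMap.ker ξ, Φ (PEo x) y = 0) :
    -- ψ has kernel 𝔫_ξ, and the splitting identity ψ̃(ψ(u)) corresponds to A₀ ∘ P_E :
    (∀ (A₀ : X →ₗ[F] W) (B₀ : W' →ₗ[F] W),
      (∀ w₁' w₂' : W', Bp w₁' (B₀ w₂') + ε * Bp w₂' (B₀ w₁') = 0) →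
      ∀ A₀s : W' →ₗ[F] X, (∀ (w' : W') (x : X), Φ (A₀s w') x = Bp w' (A₀ x)) →
        ((∀ w' : W', PE (A₀s w') = 0) ↔ ∀ e ∈ LinearMap.ker ξ, A₀ e = 0) ∧
        (∀ (w' : W') (x : X), Φ (PE (A₀s w')) x = Bp w' (A₀ (PE x)))) ∧
    -- ψ̃ is a section of ψ : for A ∈ Hom(W', E) with adjoint As, the adjoint Cs of
    -- C = A* ∘ P_E satisfies P_E ∘ Cs = A
    (∀ (A : W' →ₗ[F] X), (∀ w' : W', A w' ∈ LinearMap.ker ξ) →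
      ∀ As : X →ₗ[F] W, (∀ (w' : W') (x : X), Φ (A w') x = Bp w' (As x)) →
      ∀ Cs : W' →ₗ[F] X, (∀ (w' : W') (x : X), Φ (Cs w') x = Bp w' (As (PE x))) →
        ∀ w' : W', PE (Cs w') = A w') := by
  have hΦ : Φ.IsRefl := fun x y h => by rw [hΦε, h, mul_zero]
  have hP : LinearMap.IsProj (LinearMap.ker ξ) PE := ⟨hPE1, hPE2⟩
  have horth : ∀ x, ∀ y ∈ LinearMap.ker ξ, Φ (x - PE x) y = 0 := fun x => by
    have hx : PE x + PEo x = x := LinearMap.congr_fun hPsum x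
    rw [← eq_sub_of_add_eq' hx]
    exact hPEo x
  have hE : (LinearMap.BilinForm.restrict Φ (LinearMap.ker ξ)).SeparatingLeft := fun x hx =>
    Subtype.ext (hEnd x x.2 fun y hy => hx ⟨y, hy⟩)
  refine ⟨fun A₀ _ _ A₀s hA₀s => ⟨?_, fun w' x => ?_⟩, ?_⟩
  · exact LinearMap.BilinForm.proj_comp_adjoint_eq_zero_iff hΦ hP horth hBp2 hE hA₀s
  · rw [LinearMap.BilinForm.apply_proj_left hΦ hPE1 horth, hA₀s]
  · exact fun A hA As hAs Cs hCs =>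
      LinearMap.BilinForm.proj_comp_adjoint_comp_proj hΦ hP horth hE hA hAs hCs

/-- The split exact sequence for `𝔫`: the map `ψ : 𝔫 → Hom(W', E)`,
`u(A₀, B₀) ↦ P_E ∘ A₀*`, is surjective with kernel `𝔫_ξ`, and
`ψ̃ : A ↦ u(A* P_E, 0)` is a linear section of it; hence
`0 → 𝔫_ξ → 𝔫 → Hom(W', E) → 0` is split exact and `𝔫 = 𝔫_ξ ⊕ im ψ̃`. -/
theorem n_split_exact_sequence
    (F : Type*) [Field F] (hchar : (2 : F) ≠ 0)
    (W W' X : Type*)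
    [AddCommGroup W] [Module F W] [FiniteDimensional F W]
    [AddCommGroup W'] [Module F W'] [FiniteDimensional F W']
    [AddCommGroup X] [Module F X] [FiniteDimensional F X]
    (ε : F) (hε : ε = 1 ∨ ε = -1)
    (Bp : W' →ₗ[F] W →ₗ[F] F)
    (hBp1 : ∀ w' : W', (∀ w : W, Bp w' w = 0) → w' = 0)
    (hBp2 : ∀ w : W, (∀ w' : W', Bp w' w = 0) → w = 0)
    (Φ : X →ₗ[F] X →ₗ[F] F)
    (hΦnd : ∀ x : X, (∀ y : X, Φ x y = 0) → x = 0)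
    (hΦε : ∀ x y : X, Φ x y = ε * Φ y x)
    (ξ : X →ₗ[F] W) (hξsurj : Function.Surjective ξ)
    (hEnd : ∀ x ∈ LinearMap.ker ξ, (∀ y ∈ LinearMap.ker ξ, Φ x y = 0) → x = 0)
    (ξs : W' →ₗ[F] X)
    (hξs : ∀ (w' : W') (x : X), Φ (ξs w') x = Bp w' (ξ x))
    (PE PEo : X →ₗ[F] X)
    (hPsum : PE + PEo = LinearMap.id)
    (hPE1 : ∀ x : X, PE x ∈ LinearMap.ker ξ)
    (hPE2 : ∀ x ∈ LinearMap.ker ξ, PE x = x)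
    (hPEo : ∀ x : X, ∀ y ∈ LinearMap.ker ξ, Φ (PEo x) y = 0) :
    -- ψ has kernel 𝔫_ξ, and the splitting identity ψ̃(ψ(u)) corresponds to A₀ ∘ P_E :
    (∀ (A₀ : X →ₗ[F] W) (B₀ : W' →ₗ[F] W),
      (∀ w₁' w₂' : W', Bp w₁' (B₀ w₂') + ε * Bp w₂' (B₀ w₁') = 0) →
      ∀ A₀s : W' →ₗ[F] X, (∀ (w' : W') (x : X), Φ (A₀s w') x = Bp w' (A₀ x)) →
        ((∀ w' : W', PE (A₀s w') = 0) ↔ ∀ e ∈ LinearMap.ker ξ, A₀ e = 0) ∧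
        (∀ (w' : W') (x : X), Φ (PE (A₀s w')) x = Bp w' (A₀ (PE x)))) ∧
    -- ψ̃ is a section of ψ : for A ∈ Hom(W', E) with adjoint As, the adjoint Cs of
    -- C = A* ∘ P_E satisfies P_E ∘ Cs = A
    (∀ (A : W' →ₗ[F] X), (∀ w' : W', A w' ∈ LinearMap.ker ξ) →
      ∀ As : X →ₗ[F] W, (∀ (w' : W') (x : X), Φ (A w') x = Bp w' (As x)) →
      ∀ Cs : W' →ₗ[F] X, (∀ (w' : W') (x : X), Φ (Cs w') x = Bp w' (As (PE x))) →
        ∀ w' : W', PE (Cs w') = A w') :=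
  n_split_exact_sequence_general F W W' X ε Bp hBp2 Φ hΦε ξ hEnd PE PEo hPsum hPE1 hPE2 hPEo
end
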